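/- Let N ≥ 3 be a prime. Then there exists w ∈ {1,…,N−1} such that (1/N) ∑_{h=1}^{N−1} |cot(π h w/N)|/h ≤ (6 log N/(π N)) ∑_{h=1}^{N−1} 1/h, and consequently, by the harmonic number bound, (1/N) ∑_{h=1}^{N−1} |cot(π h w/N)|/h ≤ (11/(π log 3)) · log²(N)/N. By the inequality between ℓ² and ℓ¹ sums, the same w satisfies ((1/N²) ∑_{h=1}^{N−1} cot²(π h w/N)/h²)^{1/2} ≤ (11/(π log 3)) · log²(N)/N. -/

import Mathlib

/-!
Since `cot (π x / N)` depends only on `x mod N` and multiplication by `h` permutes the nonzero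
residues modulo the prime `N`, summing `∑_h |cot (π h w / N)| / h` over all `w` gives
`C_N · H_{N-1}` with `C_N = ∑_k |cot (π k / N)|`. From `|cot y| ≤ 1/y + 1/(π - y)` on `(0, π)` we
get `C_N ≤ (2N/π) H_{N-1} ≤ (2N/π)(1 + log N) ≤ (N - 1) · 6 log N / π`, so some `w` does no worse
than the average. The other two bounds follow from `H_{N-1} ≤ 1 + log N` and `‖·‖₂ ≤ ‖·‖₁`.
-/

open Real Finset

namespace Real

lemma cot_periodic : Function.Periodic cot π := fun x => by
  simp only [cot_eq_cos_div_sin, cos_antiperiodic x, sin_antiperiodic x, neg_div_neg_eq]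

lemma cot_pi_sub (x : ℝ) : cot (π - x) = -cot x := by
  rw [cot_eq_cos_div_sin, cot_eq_cos_div_sin, cos_pi_sub, sin_pi_sub, neg_div]

lemma mul_cos_le_sin {x : ℝ} (hx₀ : 0 ≤ x) (hxπ : x ≤ π) : x * cos x ≤ sin x := by
  rcases hx₀.eq_or_lt with rfl | hx₀
  · simp
  rcases lt_or_ge x (π / 2) with hx | hx
  · have hcos : 0 < cos x := cos_pos_of_mem_Ioo ⟨by linarith [pi_pos], hx⟩
    have := lt_tan hx₀ hx
    rw [tan_eq_sin_div_cos, lt_div_iff₀ hcos] at this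
    exact this.le
  · have hcos : cos x ≤ 0 := cos_nonpos_of_pi_div_two_le_of_le hx (by linarith [pi_pos])
    nlinarith [sin_nonneg_of_nonneg_of_le_pi hx₀.le hxπ]

lemma cot_le_one_div {x : ℝ} (hx₀ : 0 < x) (hxπ : x < π) : cot x ≤ 1 / x := by
  rw [cot_eq_cos_div_sin, div_le_div_iff₀ (sin_pos_of_pos_of_lt_pi hx₀ hxπ) hx₀, mul_comm]
  simpa using mul_cos_le_sin hx₀.le hxπ.le

lemma abs_cot_le {x : ℝ} (hx₀ : 0 < x) (hxπ : x < π) : |cot x| ≤ 1 / x + 1 / (π - x) := by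
  have h₁ := cot_le_one_div hx₀ hxπ
  have h₂ := cot_le_one_div (sub_pos.2 hxπ) (sub_lt_self π hx₀)
  rw [cot_pi_sub] at h₂
  have : 0 < 1 / x := one_div_pos.2 hx₀
  have : 0 < 1 / (π - x) := one_div_pos.2 (sub_pos.2 hxπ)
  exact abs_le.2 ⟨by linarith, by linarith⟩

lemma cot_pi_mul_div_natCast_mod (m N : ℕ) : cot (π * m / N) = cot (π * ↑(m % N) / N) := by
  rcases N.eq_zero_or_pos with rfl | hN
  · simp
  have hm : (m : ℝ) = N * ↑(m / N) + ↑(m % N) := by exact_mod_cast (Nat.div_add_mod m N).symm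
  have : π * m / N = π * ↑(m % N) / N + ↑(m / N) * π := by
    rw [hm]; field_simp; ring
  rw [this, cot_periodic.nat_mul _ _]

end Real

namespace Finset

lemma sum_Icc_sub_reflect {M : Type*} [AddCommMonoid M] (N : ℕ) (f : ℕ → M) :
    ∑ k ∈ Icc 1 (N - 1), f (N - k) = ∑ k ∈ Icc 1 (N - 1), f k := by
  refine sum_nbij' (N - ·) (N - ·) ?_ ?_ ?_ ?_ (fun _ _ => rfl) <;>
    intro k hk <;> simp only [mem_Icc] at hk ⊢ <;> omega

lemma sum_Icc_mul_mod {M : Type*} [AddCommMonoid M] {N h : ℕ} (hh : h.Coprime N)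
    (f : ℕ → M) : ∑ w ∈ Icc 1 (N - 1), f (h * w % N) = ∑ k ∈ Icc 1 (N - 1), f k := by
  have hmaps : Set.MapsTo (h * · % N) (Icc 1 (N - 1)) (Icc 1 (N - 1)) := by
    intro w hw
    simp only [coe_Icc, Set.mem_Icc] at hw ⊢
    have hmod : h * w % N ≠ 0 := fun h0 =>
      Nat.not_dvd_of_pos_of_lt (by omega) (by omega : w < N)
        (hh.symm.dvd_of_dvd_mul_left (Nat.dvd_of_mod_eq_zero h0))
    have := Nat.mod_lt (h * w) (by omega : 0 < N)
    omega
  have hinj : Set.InjOn (h * · % N) (Icc 1 (N - 1)) := by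
    intro a ha b hb hab
    simp only [coe_Icc, Set.mem_Icc] at ha hb
    have := Nat.ModEq.cancel_left_of_coprime (Nat.gcd_comm N h ▸ hh) hab
    rwa [Nat.ModEq, Nat.mod_eq_of_lt (by omega), Nat.mod_eq_of_lt (by omega)] at this
  exact sum_nbij _ hmaps hinj (surjOn_of_injOn_of_card_le _ hmaps hinj le_rfl) fun _ _ => rfl

end Finset

lemma sum_Icc_one_div_le_one_add_log (N : ℕ) :
    ∑ k ∈ Icc 1 (N - 1), (1 : ℝ) / k ≤ 1 + log N := by
  have hH : ∑ k ∈ Icc 1 (N - 1), (1 : ℝ) / k = harmonic (N - 1) := by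
    simp [harmonic_eq_sum_Icc]
  have hlog : log ↑(N - 1) ≤ log N := by
    rcases (N - 1).eq_zero_or_pos with h0 | h0
    · rw [h0, Nat.cast_zero, log_zero]; exact log_natCast_nonneg N
    · exact log_le_log (by exact_mod_cast h0) (by exact_mod_cast N.sub_le 1)
  rw [hH]
  linarith [harmonic_le_one_add_log (N - 1)]

lemma sum_Icc_one_div_le_mul_log {N : ℕ} (hp : N.Prime) (hN : 3 ≤ N) :
    ∑ k ∈ Icc 1 (N - 1), (1 : ℝ) / k ≤ 11 / (6 * log 3) * log N := by
  have hlog3 := log_three_lt_d9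
  have hlog3' := log_three_gt_d9
  -- `1 + log N` is too weak at `N = 3`, and `N = 4` is not prime.
  rcases hN.eq_or_lt with rfl | hN
  · have hH : ∑ k ∈ Icc 1 (3 - 1), (1 : ℝ) / (k : ℕ) = 3 / 2 := by
      norm_num [show Icc 1 (3 - 1) = {1, 2} by rfl]
    rw [hH, Nat.cast_ofNat, div_mul_eq_mul_div, le_div_iff₀ (by positivity)]
    linarith
  have hN5 : 5 ≤ N := by
    by_contra! h
    interval_cases N
    norm_num at hp
  have hlogN : log 5 ≤ log N := log_le_log (by norm_num) (by exact_mod_cast hN5)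
  have hlog5 := log_five_gt_d9
  refine (sum_Icc_one_div_le_one_add_log N).trans ?_
  rw [div_mul_eq_mul_div, le_div_iff₀ (by positivity)]
  nlinarith

lemma sum_abs_cot_pi_mul_div_le (N : ℕ) :
    ∑ k ∈ Icc 1 (N - 1), |cot (π * k / N)| ≤ 2 * N / π * ∑ k ∈ Icc 1 (N - 1), (1 : ℝ) / k := by
  have hterm : ∀ k ∈ Icc 1 (N - 1), |cot (π * k / N)| ≤
      N / π * (1 / k) + N / π * (1 / ↑(N - k)) := by
    intro k hk
    rw [mem_Icc] at hk
    have hk0 : (0 : ℝ) < k := by exact_mod_cast hk.1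
    have hkN : (k : ℝ) < N := by exact_mod_cast (by omega : k < N)
    have hN0 : (0 : ℝ) < N := hk0.trans hkN
    have h := abs_cot_le (x := π * k / N) (div_pos (mul_pos pi_pos hk0) hN0) (by
      rw [div_lt_iff₀ hN0]; nlinarith [pi_pos])
    convert h using 2
    · field_simp
    · rw [Nat.cast_sub (by omega)]; field_simp
  calc _ ≤ ∑ k ∈ Icc 1 (N - 1), (N / π * (1 / k) + N / π * (1 / ↑(N - k))) := sum_le_sum hterm
    _ = 2 * N / π * ∑ k ∈ Icc 1 (N - 1), (1 : ℝ) / k := by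
      rw [sum_add_distrib, sum_Icc_sub_reflect N (fun k => N / π * (1 / (k : ℝ))), ← two_mul,
        ← mul_sum]
      ring

lemma sum_abs_cot_pi_mul_div_le_mul_log {N : ℕ} (hN : 3 ≤ N) :
    ∑ k ∈ Icc 1 (N - 1), |cot (π * k / N)| ≤ (N - 1) * (6 * log N / π) := by
  have hN' : (3 : ℝ) ≤ N := by exact_mod_cast hN
  have hlogN : 1 ≤ log N := by
    linarith [log_three_gt_d9, log_le_log (by norm_num) hN']
  refine (sum_abs_cot_pi_mul_div_le N).trans <|
    (mul_le_mul_of_nonneg_left (sum_Icc_one_div_le_one_add_log N) (by positivity)).trans ?_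
  rw [div_mul_eq_mul_div, mul_div_assoc', div_le_div_iff_of_pos_right pi_pos]
  nlinarith

lemma sum_sum_abs_cot_div_eq {N : ℕ} (hp : N.Prime) :
    ∑ w ∈ Icc 1 (N - 1), ∑ h ∈ Icc 1 (N - 1), |cot (π * h * w / N)| / h =
      (∑ k ∈ Icc 1 (N - 1), |cot (π * k / N)|) * ∑ h ∈ Icc 1 (N - 1), (1 : ℝ) / h := by
  rw [sum_comm, mul_sum]
  refine sum_congr rfl fun h hh => ?_
  rw [mem_Icc] at hh
  have hco : h.Coprime N := (Nat.coprime_of_lt_prime (by omega) (by omega) hp).symm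
  calc ∑ w ∈ Icc 1 (N - 1), |cot (π * h * w / N)| / h
      = ∑ w ∈ Icc 1 (N - 1), |cot (π * ↑(h * w % N) / N)| / h :=
        sum_congr rfl fun w _ => by rw [← cot_pi_mul_div_natCast_mod, Nat.cast_mul, mul_assoc]
    _ = ∑ k ∈ Icc 1 (N - 1), |cot (π * k / N)| / h :=
        sum_Icc_mul_mod hco fun k => |cot (π * k / N)| / h
    _ = _ := by rw [← sum_div, div_eq_mul_one_div]

lemma exists_sum_abs_cot_div_le {N : ℕ} (hp : N.Prime) (hN : 3 ≤ N) :
    ∃ w ∈ Icc 1 (N - 1), ∑ h ∈ Icc 1 (N - 1), |cot (π * h * w / N)| / h ≤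
      6 * log N / π * ∑ h ∈ Icc 1 (N - 1), (1 : ℝ) / h := by
  refine exists_le_of_sum_le ⟨1, mem_Icc.2 ⟨le_rfl, by omega⟩⟩ ?_
  rw [sum_sum_abs_cot_div_eq hp, sum_const, Nat.card_Icc, Nat.add_sub_cancel, nsmul_eq_mul,
    Nat.cast_sub (by omega), Nat.cast_one]
  calc _ ≤ (N - 1) * (6 * log N / π) * ∑ h ∈ Icc 1 (N - 1), (1 : ℝ) / h :=
        mul_le_mul_of_nonneg_right (sum_abs_cot_pi_mul_div_le_mul_log hN)
          (sum_nonneg fun _ _ => by positivity)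
    _ = _ := by ring

lemma sqrt_mul_sum_sq_div_sq_le {ι : Type*} (s : Finset ι) (a b : ι → ℝ) {c : ℝ} (hc : 0 ≤ c)
    (hb : ∀ i ∈ s, 0 ≤ b i) :
    √(c ^ 2 * ∑ i ∈ s, a i ^ 2 / b i ^ 2) ≤ c * ∑ i ∈ s, |a i| / b i := by
  have hnonneg : ∀ i ∈ s, 0 ≤ |a i| / b i := fun i hi => div_nonneg (abs_nonneg _) (hb i hi)
  rw [sqrt_le_left (mul_nonneg hc (sum_nonneg hnonneg)), mul_pow]
  simp_rw [← sq_abs (a _), ← div_pow]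
  exact mul_le_mul_of_nonneg_left (sum_sq_le_sq_sum_of_nonneg hnonneg) (sq_nonneg c)

/-- Let `N ≥ 3` be a prime. Then there exists `w ∈ {1,…,N−1}` such that
`(1/N) ∑_{h=1}^{N−1} |cot(πhw/N)|/h ≤ (6 log N/(πN)) ∑_{h=1}^{N−1} 1/h`, hence
`(1/N) ∑_{h=1}^{N−1} |cot(πhw/N)|/h ≤ (11/(π log 3)) log²(N)/N`, and the same `w` satisfies
`((1/N²) ∑_{h=1}^{N−1} cot²(πhw/N)/h²)^{1/2} ≤ (11/(π log 3)) log²(N)/N`. -/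
theorem stmt16 (N : ℕ) (hp : N.Prime) (hN : 3 ≤ N) :
    ∃ w ∈ Finset.Icc 1 (N - 1),
      ((1 / (N : ℝ)) * ∑ h ∈ Finset.Icc 1 (N - 1), |Real.cot (π * h * w / N)| / (h : ℝ)
          ≤ (6 * Real.log N / (π * N)) * ∑ h ∈ Finset.Icc 1 (N - 1), (1 : ℝ) / h) ∧
      ((1 / (N : ℝ)) * ∑ h ∈ Finset.Icc 1 (N - 1), |Real.cot (π * h * w / N)| / (h : ℝ)
          ≤ (11 / (π * Real.log 3)) * (Real.log N) ^ 2 / N) ∧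
      Real.sqrt ((1 / (N : ℝ) ^ 2) * ∑ h ∈ Finset.Icc 1 (N - 1),
            Real.cot (π * h * w / N) ^ 2 / (h : ℝ) ^ 2)
          ≤ (11 / (π * Real.log 3)) * (Real.log N) ^ 2 / N := by
  obtain ⟨w, hw, hsum⟩ := exists_sum_abs_cot_div_le hp hN
  have hmean : 1 / (N : ℝ) * ∑ h ∈ Icc 1 (N - 1), |cot (π * h * w / N)| / h ≤
      6 * log N / (π * N) * ∑ h ∈ Icc 1 (N - 1), (1 : ℝ) / h :=
    calc _ ≤ 1 / (N : ℝ) * (6 * log N / π * ∑ h ∈ Icc 1 (N - 1), (1 : ℝ) / h) :=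
          mul_le_mul_of_nonneg_left hsum (by positivity)
      _ = _ := by ring
  have hlog : 1 / (N : ℝ) * ∑ h ∈ Icc 1 (N - 1), |cot (π * h * w / N)| / h ≤
      11 / (π * log 3) * log N ^ 2 / N :=
    calc _ ≤ 6 * log N / (π * N) * (11 / (6 * log 3) * log N) :=
          hmean.trans (mul_le_mul_of_nonneg_left (sum_Icc_one_div_le_mul_log hp hN) (by positivity))
      _ = _ := by field_simp
  refine ⟨w, hw, hmean, hlog, ?_⟩
  rw [← one_div_pow]
  exact (sqrt_mul_sum_sq_div_sq_le _ (fun h : ℕ => cot (π * h * w / N)) (fun h : ℕ => (h : ℝ))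
    (by positivity) fun h _ => Nat.cast_nonneg h).trans hlog
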